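/- arXiv:2012.06766 — 4 statements merged into one kernel-verified Lean document; each statement's English description precedes it below -/
import Mathlib

section
/- Let h: Γ → ℝ be a parametrized tropical curve to ℝ (a piecewise integral affine map with integer slopes on edges and legs, satisfying the balancing condition at every vertex: the sum of outgoing slopes at each vertex is zero). Let d be the sum of the multiplicities (absolute values of slopes) of the legs on which h has positive slope. Then for any point p ∈ ℝ that is not the image of a vertex of Γ, the number of preimages of p counted with edge multiplicities equals d. -/
open scoped Classical

private lemma sum_ite_vertex {V E : Type*} [Fintype V] [Fintype E]
    (P : V → Prop) [DecidablePred P] (f : E → V) (g : E → ℤ) :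
    ∑ v ∈ Finset.univ.filter P, ∑ e : E, (if f e = v then g e else 0)
      = ∑ e : E, if P (f e) then g e else 0 := by
  rw [Finset.sum_comm]
  refine Finset.sum_congr rfl fun e _ => ?_
  rw [Finset.sum_ite_eq]
  simp

/-- Let `h : Γ → ℝ` be a parametrized tropical curve to `ℝ`.  The curve is
modeled combinatorially: vertices `V` with positions `hV`, edges `E` with endpoints `ends`,
integral slopes `s` (along the chosen orientation) and positive lengths `len` compatible with
the positions, and legs `L` attached at `legV` with integral slopes `sl` (oriented away from
the vertex).  Assuming the balancing condition at every vertex, for any point `p ∈ ℝ` that is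
not the image of a vertex, the number of preimages of `p` counted with multiplicities
(absolute values of slopes) equals `d`, the sum of the multiplicities of the legs on which
`h` has positive slope. -/
theorem stmt_3 {V E L : Type*} [Fintype V] [Fintype E] [Fintype L]
    (hV : V → ℝ) (ends : E → V × V) (s : E → ℤ) (len : E → ℝ)
    (legV : L → V) (sl : L → ℤ)
    (hlen : ∀ e, 0 < len e)
    (hslope : ∀ e, hV (ends e).2 - hV (ends e).1 = (s e : ℝ) * len e)
    (hbal : ∀ v : V,
      (∑ e : E, if (ends e).1 = v then s e else 0)
        + (∑ e : E, if (ends e).2 = v then -(s e) else 0)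
        + (∑ l : L, if legV l = v then sl l else 0) = 0)
    (p : ℝ) (hp : ∀ v : V, hV v ≠ p) :
    ((∑ e : E, if min (hV (ends e).1) (hV (ends e).2) < p ∧
        p < max (hV (ends e).1) (hV (ends e).2) then |s e| else 0)
      + ∑ l : L, if (0 < sl l ∧ hV (legV l) < p) ∨ (sl l < 0 ∧ p < hV (legV l))
          then |sl l| else 0)
      = ∑ l : L, if 0 < sl l then sl l else 0 := by
  classical
  -- total balancing: the sum of all leg slopes is zero
  have hall : (∑ l : L, sl l) = 0 := by
    have h0 : ∑ v ∈ Finset.univ.filter (fun _ : V => True),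
        ((∑ e : E, if (ends e).1 = v then s e else 0)
          + (∑ e : E, if (ends e).2 = v then -(s e) else 0)
          + (∑ l : L, if legV l = v then sl l else 0)) = 0 := by
      simp [hbal]
    rw [Finset.sum_add_distrib, Finset.sum_add_distrib,
        sum_ite_vertex (fun _ => True) (fun e => (ends e).1) s,
        sum_ite_vertex (fun _ => True) (fun e => (ends e).2) (fun e => -(s e)),
        sum_ite_vertex (fun _ => True) legV sl] at h0
    simp at h0
    linarith [h0]
  -- balancing summed over vertices below p
  have hbelow : (∑ e : E, if hV (ends e).1 < p then s e else 0)
      + (∑ e : E, if hV (ends e).2 < p then -(s e) else 0)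
      + (∑ l : L, if hV (legV l) < p then sl l else 0) = 0 := by
    have h0 : ∑ v ∈ Finset.univ.filter (fun v : V => hV v < p),
        ((∑ e : E, if (ends e).1 = v then s e else 0)
          + (∑ e : E, if (ends e).2 = v then -(s e) else 0)
          + (∑ l : L, if legV l = v then sl l else 0)) = 0 := by
      simp [hbal]
    rwa [Finset.sum_add_distrib, Finset.sum_add_distrib,
        sum_ite_vertex (fun v => hV v < p) (fun e => (ends e).1) s,
        sum_ite_vertex (fun v => hV v < p) (fun e => (ends e).2) (fun e => -(s e)),
        sum_ite_vertex (fun v => hV v < p) legV sl] at h0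
  -- per-edge identity
  have hedge : ∀ e : E, (if min (hV (ends e).1) (hV (ends e).2) < p ∧
        p < max (hV (ends e).1) (hV (ends e).2) then |s e| else 0)
      = (if hV (ends e).1 < p then s e else 0)
        + (if hV (ends e).2 < p then -(s e) else 0) := by
    intro e
    have h1 := hp (ends e).1
    have h2 := hp (ends e).2
    have hs := hslope e
    have hl := hlen e
    by_cases hA : hV (ends e).1 < p <;> by_cases hB : hV (ends e).2 < p
    · rw [if_neg, if_pos hA, if_pos hB]; · ring
      rintro ⟨-, hmax⟩
      exact absurd hmax (not_lt.2 (le_of_lt (max_lt hA hB)))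
    · have hB' : p < hV (ends e).2 := lt_of_le_of_ne (not_lt.1 hB) (Ne.symm h2)
      have hpos : 0 < s e := by
        have hr : (0 : ℝ) < (s e : ℝ) := by nlinarith
        exact_mod_cast hr
      rw [if_pos ⟨lt_of_le_of_lt (min_le_left _ _) hA,
            lt_of_lt_of_le hB' (le_max_right _ _)⟩,
          if_pos hA, if_neg hB, abs_of_pos hpos]
      ring
    · have hA' : p < hV (ends e).1 := lt_of_le_of_ne (not_lt.1 hA) (Ne.symm h1)
      have hneg : s e < 0 := by
        have hr : (s e : ℝ) < 0 := by nlinarith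
        exact_mod_cast hr
      rw [if_pos ⟨lt_of_le_of_lt (min_le_right _ _) hB,
            lt_of_lt_of_le hA' (le_max_left _ _)⟩,
          if_neg hA, if_pos hB, abs_of_neg hneg]
      ring
    · rw [if_neg, if_neg hA, if_neg hB]; · ring
      have hA' : p < hV (ends e).1 := lt_of_le_of_ne (not_lt.1 hA) (Ne.symm h1)
      have hB' : p < hV (ends e).2 := lt_of_le_of_ne (not_lt.1 hB) (Ne.symm h2)
      rintro ⟨hmin, -⟩
      exact absurd hmin (not_lt.2 (le_of_lt (lt_min hA' hB')))
  -- per-leg identity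
  have hleg : ∀ l : L, (if (0 < sl l ∧ hV (legV l) < p) ∨ (sl l < 0 ∧ p < hV (legV l))
        then |sl l| else 0)
      = (if sl l < 0 then -(sl l) else 0) + (if hV (legV l) < p then sl l else 0) := by
    intro l
    have h1 := hp (legV l)
    by_cases hb : hV (legV l) < p
    · rw [if_pos hb]
      rcases lt_trichotomy (sl l) 0 with hneg | hz | hpos
      · rw [if_neg, if_pos hneg]
        · omega
        · rintro (⟨h, -⟩ | ⟨-, h⟩) <;> [omega; exact absurd hb (not_lt.2 (le_of_lt h))]
      · simp [hz]
      · rw [if_pos (Or.inl ⟨hpos, hb⟩), if_neg (by omega), abs_of_pos hpos]; ring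
    · have hb' : p < hV (legV l) := lt_of_le_of_ne (not_lt.1 hb) (Ne.symm h1)
      rw [if_neg hb, add_zero]
      rcases lt_trichotomy (sl l) 0 with hneg | hz | hpos
      · rw [if_pos (Or.inr ⟨hneg, hb'⟩), if_pos hneg, abs_of_neg hneg]
      · simp [hz]
      · rw [if_neg, if_neg (by omega)]
        rintro (⟨-, h⟩ | ⟨h, -⟩) <;> [exact hb h; omega]
  -- combine
  have hsplit : (∑ l : L, sl l)
      = (∑ l : L, if 0 < sl l then sl l else 0) + ∑ l : L, (if sl l < 0 then sl l else 0) := by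
    rw [← Finset.sum_add_distrib]
    refine Finset.sum_congr rfl fun l _ => ?_
    by_cases h : 0 < sl l <;> by_cases h' : sl l < 0 <;> simp [h, h'] <;> omega
  rw [Finset.sum_congr rfl fun e _ => hedge e, Finset.sum_congr rfl fun l _ => hleg l,
      Finset.sum_add_distrib, Finset.sum_add_distrib]
  have hnegsum : (∑ l : L, if sl l < 0 then -(sl l) else 0)
      = -∑ l : L, (if sl l < 0 then sl l else 0) := by
    rw [← Finset.sum_neg_distrib]
    refine Finset.sum_congr rfl fun l _ => ?_
    split <;> simp
  rw [hnegsum]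
  linarith [hbelow, hsplit, hall]
end

section
/- Let K be a field, a, b nonnegative integers with a + b > 0, and suppose char(K) = 0 or char(K) > max{2, a+b}. Set c = 0 and let F(t) = t² − (2b/(a+2b))·t if a + 2b ≠ 0 (i.e., the quadratic t² − ((2a+2b)c + 2b)/(a+2b) · t + c specialized at c = 0). Then for every μ ∈ K, the polynomial F(t) does not divide G_μ(t) = t^b (t−1)^a − μ in K[t]. -/
open Polynomial

/-- Let `K` be a field with `char K = 0` or `char K > max 2 (a+b)`, where
`a, b` are nonnegative integers with `a + b > 0` and `a + 2b ≠ 0` in `K`.  Let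
`F(t) = t² - (2b/(a+2b))·t` (the quadratic `t² - ((2a+2b)c + 2b)/(a+2b)·t + c`
specialized at `c = 0`).  Then for every `μ ∈ K`, `F(t)` does not divide
`G_μ(t) = t^b (t-1)^a - μ`. -/
theorem stmt_7 {K : Type*} [Field K] (a b : ℕ) (hab : 0 < a + b)
    (hchar : ∀ p : ℕ, CharP K p → p = 0 ∨ max 2 (a + b) < p)
    (hK : ((a : K) + 2 * (b : K)) ≠ 0) :
    ∀ μ : K,
      ¬ ((X ^ 2 - C ((2 * (b : K)) / ((a : K) + 2 * (b : K))) * X : K[X]) ∣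
          (X ^ b * (X - 1) ^ a - C μ)) := by
  have hcast : ∀ n : ℕ, 0 < n → n ≤ max 2 (a + b) → (n : K) ≠ 0 := by
    intro n hn hle
    obtain ⟨p, hp⟩ := CharP.exists K
    rcases hchar p hp with h | h
    · subst h
      haveI : CharZero K := CharP.charP_to_charZero K
      exact Nat.cast_ne_zero.mpr hn.ne'
    · intro hz
      have hd := (CharP.cast_eq_zero_iff K p n).mp hz
      have := Nat.le_of_dvd hn hd
      omega
  have h2 : (2 : K) ≠ 0 := by
    have := hcast 2 (by norm_num) (le_max_left _ _)
    simpa using this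
  intro μ hdvd
  set r : K := (2 * (b : K)) / ((a : K) + 2 * (b : K)) with hr
  obtain ⟨Q, hQ⟩ := hdvd
  have h0 : ((0:K) ^ b * ((0:K) - 1) ^ a - μ) = 0 := by
    have := congrArg (eval (0:K)) hQ
    simpa using this
  have hrr : (r ^ b * (r - 1) ^ a - μ) = 0 := by
    have := congrArg (eval r) hQ
    have hF : (X ^ 2 - C r * X : K[X]).eval r = 0 := by simp; ring
    simpa [hF] using this
  rcases Nat.eq_zero_or_pos b with hb | hb
  · -- b = 0 : r = 0, F = X^2, use derivative
    have ha : 0 < a := by omega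
    have haK : (a : K) ≠ 0 :=
      hcast a ha (le_trans (Nat.le_add_right a b) (le_max_right _ _))
    have hr0 : r = 0 := by simp [hr, hb]
    have hder := congrArg (fun P => eval (0:K) (derivative P)) hQ
    simp only [derivative_sub, derivative_mul, derivative_pow, derivative_X, derivative_C,
      derivative_one, hb, hr0, map_zero] at hder
    simp [hb, hr0] at hder
    exact haK hder
  · -- b > 0
    have hbK : (b : K) ≠ 0 :=
      hcast b hb (le_trans (Nat.le_add_left b a) (le_max_right _ _))
    have hμ : μ = 0 := by
      have hz : (0:K) ^ b = 0 := zero_pow hb.ne'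
      rw [hz, zero_mul, zero_sub, neg_eq_zero] at h0
      exact h0
    rw [hμ, sub_zero] at hrr
    rcases mul_eq_zero.mp hrr with h | h
    · have hr0 : r = 0 := pow_eq_zero_iff hb.ne' |>.mp h
      have h2b : (2 * (b:K)) = 0 := (div_eq_zero_iff.mp (hr ▸ hr0)).resolve_right hK
      exact mul_ne_zero h2 hbK h2b
    · have ha : a ≠ 0 := by
        intro ha0; rw [ha0] at h; simp at h
      have haK : (a : K) ≠ 0 :=
        hcast a (Nat.pos_of_ne_zero ha) (le_trans (Nat.le_add_right a b) (le_max_right _ _))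
      have hr1 : r = 1 := by
        have := pow_eq_zero_iff ha |>.mp h
        linear_combination this
      have := hr ▸ hr1
      field_simp at this
      exact haK (by linear_combination -this)
end

section
/- Let K be an algebraically closed field of characteristic 0, a, b nonnegative integers with a + b > 0, and let c ∈ K be general (outside a finite set). Let F(t) = t² − ((2a+2b)c + 2b)/(a+2b) · t + c (assuming a + 2b ≠ 0). Then there is no μ ∈ K^× such that F(t) divides t^b(t−1)^a − μ. Equivalently, if t₁t₂ = c, t₁ + t₂ = ((2a+2b)c + 2b)/(a+2b), and t₁^b(t₁−1)^a = t₂^b(t₂−1)^a with t₁ ≠ t₂ both nonzero and ≠ 1, then c lies in a fixed finite subset of K depending only on a and b. -/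
open Polynomial

/-- Let `K` be an algebraically closed field of characteristic `0`,
`a, b` nonnegative integers with `a + b > 0`, and let
`F_c(t) = t² - ((2a+2b)c + 2b)/(a+2b)·t + c`.  Then for `c` general (outside a finite
subset of `K` depending only on `a` and `b`), there is no `μ ∈ K^×` such that `F_c(t)`
divides `t^b (t-1)^a - μ`. -/
theorem stmt_16 {K : Type*} [Field K] [IsAlgClosed K] [CharZero K]
    (a b : ℕ) (hab : 0 < a + b) :
    ∃ Bad : Finset K, ∀ c : K, c ∉ Bad → ∀ μ : K, μ ≠ 0 →
      ¬ ((X ^ 2 - C (((2 * (a : K) + 2 * (b : K)) * c + 2 * (b : K)) /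
            ((a : K) + 2 * (b : K))) * X + C c : K[X]) ∣
          (X ^ b * (X - 1) ^ a - C μ)) := by
  classical
  have hk2 : ((a : K) + 2 * (b : K)) ≠ 0 := by
    have h : ((a + 2 * b : ℕ) : K) ≠ 0 := Nat.cast_ne_zero.mpr (by omega)
    push_cast at h
    convert h using 2
  -- generic quadratic over K[c]
  set st : K[X] := C ((2 * (a : K) + 2 * (b : K)) / ((a : K) + 2 * (b : K))) * X
      + C (2 * (b : K) / ((a : K) + 2 * (b : K))) with hst
  set Ft : (K[X])[X] := X ^ 2 - C st * X + C X with hFt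
  have hFtm : Ft.Monic := by rw [hFt]; monicity!
  have hFtdeg : Ft.degree = 2 := by rw [hFt]; compute_degree!
  set Rt : (K[X])[X] := (X ^ b * (X - 1) ^ a) %ₘ Ft with hRt
  have hRdeg : Rt.degree ≤ 1 := by
    have h := degree_modByMonic_lt (X ^ b * (X - 1) ^ a) hFtm
    rw [hFtdeg] at h
    rw [← hRt] at h
    exact Order.le_of_lt_succ (by exact_mod_cast h)
  have hRrepr : Rt = C (Rt.coeff 1) * X + C (Rt.coeff 0) :=
    eq_X_add_C_of_degree_le_one hRdeg
  set A : K[X] := Rt.coeff 1 with hA_def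
  set B : K[X] := Rt.coeff 0 with hB_def
  -- specialization
  have hstev : ∀ c : K, eval c st =
      ((2 * (a : K) + 2 * (b : K)) * c + 2 * (b : K)) / ((a : K) + 2 * (b : K)) := by
    intro c
    rw [hst]
    simp only [eval_add, eval_mul, eval_C, eval_X]
    field_simp
  have hmap : ∀ c : K, Ft.map (evalRingHom c) =
      (X ^ 2 - C (((2 * (a : K) + 2 * (b : K)) * c + 2 * (b : K)) /
        ((a : K) + 2 * (b : K))) * X + C c : K[X]) := by
    intro c
    rw [hFt]
    simp only [Polynomial.map_add, Polynomial.map_sub, Polynomial.map_mul,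
      Polynomial.map_pow, map_C, map_X, coe_evalRingHom]
    rw [hstev c]
    simp
  have hgmap : ∀ c : K, (X ^ b * (X - 1) ^ a : (K[X])[X]).map (evalRingHom c)
      = (X ^ b * (X - 1) ^ a : K[X]) := by
    intro c
    simp [Polynomial.map_mul, Polynomial.map_pow, Polynomial.map_sub]
  have spec : ∀ c : K, (X ^ b * (X - 1) ^ a : K[X]) %ₘ
      (X ^ 2 - C (((2 * (a : K) + 2 * (b : K)) * c + 2 * (b : K)) /
        ((a : K) + 2 * (b : K))) * X + C c : K[X])
      = C (eval c A) * X + C (eval c B) := by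
    intro c
    rw [← hmap c, ← hgmap c, ← map_modByMonic _ hFtm, ← hRt]
    conv_lhs => rw [hRrepr]
    simp only [Polynomial.map_add, Polynomial.map_mul, map_C, map_X,
      coe_evalRingHom, ← hA_def, ← hB_def]
  -- A is a nonzero polynomial in c
  have hA : A ≠ 0 := by
    intro hA0
    have key : ∀ t₁ t₂ : K,
        ((2 * (a : K) + 2 * (b : K)) * (t₁ * t₂) + 2 * (b : K)) /
          ((a : K) + 2 * (b : K)) = t₁ + t₂ →
        t₁ ^ b * (t₁ - 1) ^ a = t₂ ^ b * (t₂ - 1) ^ a := by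
      intro t₁ t₂ hs
      set c : K := t₁ * t₂ with hc
      have hmod : (X ^ b * (X - 1) ^ a : K[X]) %ₘ
          (X ^ 2 - C (t₁ + t₂) * X + C c : K[X]) = C (eval c B) := by
        have h := spec c
        rw [hs, hA0] at h
        simpa using h
      have hFm' : (X ^ 2 - C (t₁ + t₂) * X + C c : K[X]).Monic := by monicity!
      have hdvd : (X ^ 2 - C (t₁ + t₂) * X + C c : K[X]) ∣
          (X ^ b * (X - 1) ^ a - C (eval c B)) := by
        refine ⟨(X ^ b * (X - 1) ^ a : K[X]) /ₘ (X ^ 2 - C (t₁ + t₂) * X + C c), ?_⟩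
        have h2 := modByMonic_add_div (X ^ b * (X - 1) ^ a : K[X]) (X ^ 2 - C (t₁ + t₂) * X + C c)
        rw [hmod] at h2
        linear_combination -h2
      obtain ⟨q, hq⟩ := hdvd
      have ev : ∀ t : K, t ^ 2 - (t₁ + t₂) * t + c = 0 →
          t ^ b * (t - 1) ^ a = eval c B := by
        intro t ht
        have h3 := congrArg (eval t) hq
        simp only [eval_sub, eval_add, eval_mul, eval_pow, eval_C, eval_X, eval_one] at h3
        rw [ht, zero_mul] at h3
        exact sub_eq_zero.mp h3
      have e1 := ev t₁ (by rw [hc]; ring)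
      have e2 := ev t₂ (by rw [hc]; ring)
      rw [e1, e2]
    rcases Nat.eq_zero_or_pos a with ha | ha
    · -- a = 0, b > 0
      subst ha
      have hb : 0 < b := by omega
      have hbK : (b : K) ≠ 0 := Nat.cast_ne_zero.mpr hb.ne'
      have h := key 2 1 (by push_cast; field_simp; ring)
      norm_num at h
      have h' : ((2 ^ b : ℕ) : K) = ((1 : ℕ) : K) := by push_cast; simpa using h
      have := Nat.cast_injective h'
      have h2 : 1 < 2 ^ b := Nat.one_lt_two_pow_iff.mpr hb.ne'
      omega
    rcases Nat.eq_zero_or_pos b with hb | hb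
    · -- b = 0, a > 0
      subst hb
      have haK : (a : K) ≠ 0 := Nat.cast_ne_zero.mpr ha.ne'
      have h := key 2 (2/3) (by push_cast; field_simp; ring_nf; simp [haK])
      have h3 : (3 : K) ^ a ≠ 0 := pow_ne_zero _ (by norm_num)
      have h' : (3 : K) ^ a = (-1) ^ a := by
        have h1 : ((2 : K) - 1) ^ a = 1 := by norm_num
        have h2 : ((3 : K) * (2 / 3 - 1)) ^ a = (-1 : K) ^ a := by norm_num
        rw [mul_pow] at h2
        rw [pow_zero, pow_zero, one_mul, one_mul, h1] at h
        rw [← h, mul_one] at h2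
        exact h2
      rcases Nat.even_or_odd a with he | ho
      · rw [he.neg_one_pow] at h'
        have h'' : ((3 ^ a : ℕ) : K) = ((1 : ℕ) : K) := by push_cast; simpa using h'
        have := Nat.cast_injective h''
        have : 1 < 3 ^ a := Nat.one_lt_pow ha.ne' (by norm_num)
        omega
      · rw [ho.neg_one_pow] at h'
        have h'' : ((3 ^ a + 1 : ℕ) : K) = 0 := by push_cast; linear_combination h'
        exact Nat.cast_ne_zero.mpr (by positivity) h''
    · -- a > 0, b > 0
      have hbK : (2 * (b : K)) ≠ 0 := by
        have : (b : K) ≠ 0 := Nat.cast_ne_zero.mpr hb.ne'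
        simpa using this
      set t₂ : K := 2 * (b : K) / ((a : K) + 2 * (b : K)) with ht₂
      have h := key 0 t₂ (by rw [ht₂]; field_simp; ring)
      rw [zero_pow hb.ne'] at h
      have ht₂0 : t₂ ≠ 0 := div_ne_zero hbK hk2
      have ht₂1 : t₂ - 1 ≠ 0 := by
        intro h0
        have : t₂ = 1 := sub_eq_zero.mp h0
        rw [ht₂, div_eq_one_iff_eq hk2] at this
        have : (a : K) = 0 := by linear_combination -this
        exact Nat.cast_ne_zero.mpr ha.ne' this
      have : t₂ ^ b * (t₂ - 1) ^ a ≠ 0 :=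
        mul_ne_zero (pow_ne_zero _ ht₂0) (pow_ne_zero _ ht₂1)
      rw [zero_mul] at h
      exact this h.symm
  -- main conclusion
  refine ⟨A.roots.toFinset, ?_⟩
  intro c hc μ hμ hdvd
  have hFm : (X ^ 2 - C (((2 * (a : K) + 2 * (b : K)) * c + 2 * (b : K)) /
      ((a : K) + 2 * (b : K))) * X + C c : K[X]).Monic := by monicity!
  have hFdeg : (X ^ 2 - C (((2 * (a : K) + 2 * (b : K)) * c + 2 * (b : K)) /
      ((a : K) + 2 * (b : K))) * X + C c : K[X]).degree = 2 := by compute_degree!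
  have hAe : eval c A ≠ 0 := by
    intro h0
    exact hc (Multiset.mem_toFinset.mpr (mem_roots'.mpr ⟨hA, h0⟩))
  have h0 : (X ^ b * (X - 1) ^ a - C μ : K[X]) %ₘ _ = 0 :=
    (modByMonic_eq_zero_iff_dvd hFm).mpr hdvd
  have h1 : (X ^ b * (X - 1) ^ a : K[X]) %ₘ (X ^ 2 -
      C (((2 * (a : K) + 2 * (b : K)) * c + 2 * (b : K)) /
      ((a : K) + 2 * (b : K))) * X + C c) = C μ := by
    have hsplit : (X ^ b * (X - 1) ^ a : K[X]) =
        (X ^ b * (X - 1) ^ a - C μ) + C μ := by ring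
    rw [hsplit, add_modByMonic, h0, zero_add,
      (modByMonic_eq_self_iff hFm).mpr (by rw [hFdeg]; exact lt_of_le_of_lt degree_C_le (by norm_num))]
  rw [spec c] at h1
  have h2 := congrArg (fun p => coeff p 1) h1
  simp [coeff_C] at h2
  exact hAe h2
end

section
/- Let R(t) = A(c)·t + B(c) be the remainder of t^b(t−1)^a upon division by F(t) = t² − ((2a+2b)c + 2b)/(a+2b)·t + c in K[t], viewed as polynomials in t with coefficients rational functions of c, where K is a field with char(K) = 0 or char(K) > max{2, a+b}, a, b ∈ ℤ_{≥0}, a + b > 0, a + 2b ≠ 0. Then A(c) is not the zero function; specifically, at c = 0, F(t) = t(t − 2b/(a+2b)) does not divide t^b(t−1)^a − μ for any μ ∈ K. -/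
/-!
Since `F` is monic with coefficients in `K[c]`, remainders modulo `F` over `K(c)` are images of
remainders over `K[c]`, and evaluation at `c = 0` is a ring map `K[c] → K` commuting with them. So if the `t`-coefficient `A(c)` of the remainder vanished, the specialised remainder would be a
constant `μ`, and `F(0, t) = t (t - r)`, `r = 2b/(a+2b)`, would divide `t^b (t-1)^a - μ`.
That is impossible: for `b = 0` the quadratic is `t²` and the `t`-coefficient of `(t-1)^a` is
`± a ≠ 0`; for `b > 0` the two roots `0` and `r` would give `0 = r^b (r-1)^a`, forcing `r = 1`,
i.e. `a = 0` in `K`.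
-/

open Polynomial

theorem natCast_ne_zero_of_le {R : Type*} [NonAssocSemiring R] {N : ℕ}
    (hchar : ∀ p : ℕ, CharP R p → p = 0 ∨ N < p) {n : ℕ} (hn : n ≠ 0) (hnN : n ≤ N) :
    (n : R) ≠ 0 := by
  intro h
  have hdvd := (CharP.cast_eq_zero_iff R (ringChar R) n).mp h
  rcases hchar (ringChar R) (ringChar.charP R) with hp | hp
  · rw [hp, zero_dvd_iff] at hdvd
    exact hn hdvd
  · exact absurd (Nat.le_of_dvd (Nat.pos_of_ne_zero hn) hdvd) (by omega)

section Remainder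

variable {R : Type*} [CommRing R]

theorem eval_eq_of_dvd_sub_C {p q : R[X]} {μ x : R} (hdvd : q ∣ p - C μ) (hx : q.IsRoot x) :
    p.eval x = μ := by
  obtain ⟨s, hs⟩ := hdvd
  have := congrArg (eval x) hs
  rwa [eval_sub, eval_C, eval_mul, hx.eq_zero, zero_mul, sub_eq_zero] at this

theorem coeff_one_eq_zero_of_X_sq_dvd_sub_C {p : R[X]} {μ : R} (hdvd : X ^ 2 ∣ p - C μ) :
    p.coeff 1 = 0 := by
  simpa using X_pow_dvd_iff.mp hdvd 1 one_lt_two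

theorem dvd_sub_C_of_coeff_one_modByMonic_eq_zero {p q : R[X]} (hq : q.Monic)
    (hdeg : q.natDegree = 2) (h1 : (p %ₘ q).coeff 1 = 0) :
    q ∣ p - C ((p %ₘ q).coeff 0) := by
  have hq1 : q ≠ 1 := fun h => by simp [h] at hdeg
  have hrem : p %ₘ q = C ((p %ₘ q).coeff 0) := by
    have hlt := hdeg ▸ natDegree_modByMonic_lt p hq hq1
    rw [eq_X_add_C_of_natDegree_le_one (by omega : (p %ₘ q).natDegree ≤ 1), h1]
    simp
  refine ⟨p /ₘ q, ?_⟩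
  rw [← hrem]
  linear_combination (modByMonic_add_div p q).symm

end Remainder

section Field

variable {K : Type*} [Field K]

theorem not_X_sq_dvd_X_sub_one_pow_sub_C {a : ℕ} (ha : (a : K) ≠ 0) (μ : K) :
    ¬ (X ^ 2 : K[X]) ∣ (X - 1) ^ a - C μ := by
  intro hdvd
  have h1 := coeff_one_eq_zero_of_X_sq_dvd_sub_C hdvd
  rw [sub_eq_add_neg, ← C_1, ← C_neg, coeff_X_add_C_pow, Nat.choose_one_right] at h1
  exact ha ((mul_eq_zero.mp h1).resolve_left (pow_ne_zero _ (neg_ne_zero.mpr one_ne_zero)))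

theorem not_X_sq_sub_C_mul_X_dvd_X_pow_mul_X_sub_one_pow_sub_C (a b : ℕ)
    (hchar : ∀ p : ℕ, CharP K p → p = 0 ∨ max 2 (a + b) < p)
    (hK : ((a : K) + 2 * (b : K)) ≠ 0) (μ : K) :
    ¬ ((X ^ 2 - C ((2 * (b : K)) / ((a : K) + 2 * (b : K))) * X : K[X]) ∣
        (X ^ b * (X - 1) ^ a - C μ)) := by
  intro hdvd
  rcases Nat.eq_zero_or_pos b with rfl | hb
  · simp only [Nat.cast_zero, mul_zero, add_zero, zero_div, map_zero, zero_mul, sub_zero,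
      pow_zero, one_mul] at hdvd hK
    exact not_X_sq_dvd_X_sub_one_pow_sub_C hK μ hdvd
  set r : K := 2 * (b : K) / ((a : K) + 2 * (b : K))
  have hroot0 : (X ^ 2 - C r * X).IsRoot 0 := by simp
  have hrootr : (X ^ 2 - C r * X).IsRoot r := by simp [sq]
  have heval := (eval_eq_of_dvd_sub_C hdvd hrootr).trans (eval_eq_of_dvd_sub_C hdvd hroot0).symm
  simp only [eval_mul, eval_pow, eval_sub, eval_X, eval_one, zero_pow hb.ne', zero_mul] at heval
  have h2 : (2 : K) ≠ 0 := by exact_mod_cast natCast_ne_zero_of_le hchar two_ne_zero (by omega)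
  have hbK : (b : K) ≠ 0 := natCast_ne_zero_of_le hchar hb.ne' (by omega)
  have hr0 : r ≠ 0 := div_ne_zero (mul_ne_zero h2 hbK) hK
  have hr1 : (r - 1) ^ a = 0 := (mul_eq_zero.mp heval).resolve_left (pow_ne_zero b hr0)
  have ha : a ≠ 0 := by
    rintro rfl
    exact one_ne_zero ((pow_zero _).symm.trans hr1)
  have haK : (a : K) = 0 := by
    rw [pow_eq_zero_iff ha, sub_eq_zero, div_eq_one_iff_eq hK] at hr1
    linear_combination -hr1
  exact natCast_ne_zero_of_le hchar ha (by omega) haK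

/-- `F(c, t)` over `K[c]`, with `c` the variable of `K[X]` and `t` that of `K[X][X]`. -/
noncomputable def quadraticFamily (a b : ℕ) : K[X][X] :=
  X ^ 2 - C (Polynomial.C ((a + 2 * b : K)⁻¹) *
      (Polynomial.C (2 * a + 2 * b : K) * Polynomial.X + Polynomial.C (2 * b : K))) * X +
    C Polynomial.X

theorem quadraticFamily_monic (a b : ℕ) : (quadraticFamily a b : K[X][X]).Monic := by
  unfold quadraticFamily
  monicity!

theorem natDegree_quadraticFamily (a b : ℕ) : (quadraticFamily a b : K[X][X]).natDegree = 2 := by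
  unfold quadraticFamily
  compute_degree!

theorem map_quadraticFamily_algebraMap (a b : ℕ) :
    (quadraticFamily a b : K[X][X]).map (algebraMap K[X] (RatFunc K)) =
      X ^ 2 - C (((2 * (a : RatFunc K) + 2 * (b : RatFunc K)) * RatFunc.X
          + 2 * (b : RatFunc K)) / ((a : RatFunc K) + 2 * (b : RatFunc K))) * X
        + C RatFunc.X := by
  simp [quadraticFamily, RatFunc.algebraMap_C, RatFunc.algebraMap_X, div_eq_inv_mul, map_ofNat]

theorem map_quadraticFamily_evalRingHom_zero (a b : ℕ) :
    (quadraticFamily a b : K[X][X]).map (evalRingHom 0) =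
      X ^ 2 - C ((2 * (b : K)) / ((a : K) + 2 * (b : K))) * X := by
  simp [quadraticFamily, div_eq_inv_mul]

end Field

theorem stmt_17_general {K : Type*} [Field K] (a b : ℕ)
    (hchar : ∀ p : ℕ, CharP K p → p = 0 ∨ max 2 (a + b) < p)
    (hK : ((a : K) + 2 * (b : K)) ≠ 0) :
    (((X ^ b * (X - 1) ^ a : (RatFunc K)[X]) %ₘ
        (X ^ 2 - C (((2 * (a : RatFunc K) + 2 * (b : RatFunc K)) * RatFunc.X
              + 2 * (b : RatFunc K)) / ((a : RatFunc K) + 2 * (b : RatFunc K))) * X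
          + C (RatFunc.X))).coeff 1 ≠ 0) ∧
    ∀ μ : K,
      ¬ ((X ^ 2 - C ((2 * (b : K)) / ((a : K) + 2 * (b : K))) * X : K[X]) ∣
          (X ^ b * (X - 1) ^ a - C μ)) := by
  have hμ := not_X_sq_sub_C_mul_X_dvd_X_pow_mul_X_sub_one_pow_sub_C a b hchar hK
  refine ⟨?_, hμ⟩
  set g : K[X][X] := X ^ b * (X - 1) ^ a
  have hg : ∀ {S : Type _} [CommRing S] (φ : K[X] →+* S), g.map φ = X ^ b * (X - 1) ^ a := by
    simp [g]
  have hF := quadraticFamily_monic (K := K) a b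
  rw [← map_quadraticFamily_algebraMap, ← hg, ← map_modByMonic _ hF, coeff_map, ne_eq,
    map_eq_zero_iff _ (RatFunc.algebraMap_injective K)]
  intro hA
  have hdvd := Polynomial.map_dvd (evalRingHom 0)
    (dvd_sub_C_of_coeff_one_modByMonic_eq_zero hF (natDegree_quadraticFamily a b) hA)
  rw [Polynomial.map_sub, map_C, hg, map_quadraticFamily_evalRingHom_zero] at hdvd
  exact hμ _ hdvd

/-- Work over the field `K(c) = RatFunc K` of rational functions in the
variable `c`, with `K` a field of characteristic `0` or `> max 2 (a+b)`, and `a, b ∈ ℕ`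
with `a + b > 0` and `a + 2b ≠ 0` in `K`.  Let
`F(t) = t² - ((2a+2b)c + 2b)/(a+2b)·t + c ∈ K(c)[t]` and write
`t^b (t-1)^a = Q(t)F(t) + A(c)t + B(c)` (division with remainder by the monic quadratic
`F`).  Then `A(c)` is not the zero rational function; specifically, at `c = 0` the
quadratic `F(t) = t² - (2b/(a+2b))t = t(t - 2b/(a+2b))` does not divide
`t^b(t-1)^a - μ` for any `μ ∈ K`. -/
theorem stmt_17 {K : Type*} [Field K] (a b : ℕ) (hab : 0 < a + b)
    (hchar : ∀ p : ℕ, CharP K p → p = 0 ∨ max 2 (a + b) < p)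
    (hK : ((a : K) + 2 * (b : K)) ≠ 0) :
    (((X ^ b * (X - 1) ^ a : (RatFunc K)[X]) %ₘ
        (X ^ 2 - C (((2 * (a : RatFunc K) + 2 * (b : RatFunc K)) * RatFunc.X
              + 2 * (b : RatFunc K)) / ((a : RatFunc K) + 2 * (b : RatFunc K))) * X
          + C (RatFunc.X))).coeff 1 ≠ 0) ∧
    ∀ μ : K,
      ¬ ((X ^ 2 - C ((2 * (b : K)) / ((a : K) + 2 * (b : K))) * X : K[X]) ∣
          (X ^ b * (X - 1) ^ a - C μ)) :=
  stmt_17_general a b hchar hK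
end
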